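/- Let 𝒢 be a groupoid with 𝒢₀ finite, let B be a 𝒢-graded R-category, and let α be the global action of 𝒢 on B#𝒢 given on objects by α₀^g(x,s) = (x,gs) for s ∈ 𝒢(−, d(g)) and on morphisms by the identity maps between _{(y,t)}I^{g}-components. Then the skew groupoid category (B#𝒢)∗_α𝒢 is equivalent to B⊗𝒢: for objects (x,s), (y,t) of B#𝒢 there is a natural identification _{(y,t)}[(B#𝒢)∗_α𝒢]_{(x,s)} = ⊕_{u: d(u)=d(s), r(u)=d(t)} _yB_x^u = _{(y,d(t))}(B⊗𝒢)_{(x,d(s))}, and the functor F : (B#𝒢)∗_α𝒢 → B⊗𝒢 with F(x,s) = (x,d(s)) which is this identification on morphisms is full, faithful and essentially surjective, hence an equivalence of R-categories. -/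

import Mathlib

open scoped Classical

noncomputable section

universe u u₂ v v' w w'

/-- A one-sorted (algebraic) groupoid: a set `G` of morphisms with a
partially defined multiplication (`comp g h` meaning `d g = r h`), a total
extension `mul` of it, and inversion. -/
structure AlgGroupoid (G : Type u₂) where
  mul : G → G → G
  inv : G → G
  comp : G → G → Prop
  comp_iff : ∀ g h, comp g h ↔ mul (inv g) g = mul h (inv h)
  mul_assoc' : ∀ g h k, comp g h → comp h k → mul (mul g h) k = mul g (mul h k)
  comp_mul_left : ∀ g h k, comp g h → comp h k → comp (mul g h) k
  comp_mul_right : ∀ g h k, comp g h → comp h k → comp g (mul h k)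
  inv_inv' : ∀ g, inv (inv g) = g
  comp_inv_left : ∀ g, comp (inv g) g
  comp_inv_right : ∀ g, comp g (inv g)
  inv_mul_cancel' : ∀ g h, comp g h → mul (inv g) (mul g h) = h
  mul_inv_cancel' : ∀ g h, comp g h → mul (mul g h) (inv h) = g
  inv_mul' : ∀ g h, comp g h → inv (mul g h) = mul (inv h) (inv g)

namespace AlgGroupoid

variable {G : Type u₂}

/-- The domain identity `d g = g⁻¹ g`. -/
def d (𝒢 : AlgGroupoid G) (g : G) : G := 𝒢.mul (𝒢.inv g) g

/-- The range identity `r g = g g⁻¹`. -/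
def r (𝒢 : AlgGroupoid G) (g : G) : G := 𝒢.mul g (𝒢.inv g)

/-- The set of identities `𝒢₀` of the groupoid. -/
def units (𝒢 : AlgGroupoid G) : Set G := {e | ∃ g, e = 𝒢.d g}

/-- A partial action of a groupoid `𝒢` on the subset `X` of the type `Y`:
the data is a family of domains `D g ⊆ X` and a (total extension of a)
family of maps `act g : D g⁻¹ → D g`. -/
def IsPartialActionOn {Y : Type v} (𝒢 : AlgGroupoid G)
    (X : Set Y) (D : G → Set Y) (act : G → Y → Y) : Prop :=
  (∀ g, D g ⊆ X) ∧
  (∀ g, D g ⊆ D (𝒢.r g)) ∧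
  (∀ x ∈ X, ∃ e ∈ 𝒢.units, x ∈ D e) ∧
  (∀ e ∈ 𝒢.units, ∀ x ∈ D e, act e x = x) ∧
  (∀ g, ∀ x ∈ D (𝒢.inv g), act g x ∈ D g) ∧
  (∀ g, ∀ x ∈ D (𝒢.inv g), act (𝒢.inv g) (act g x) = x) ∧
  (∀ g h, 𝒢.comp g h → act g '' (D (𝒢.inv g) ∩ D h) = D g ∩ D (𝒢.mul g h)) ∧
  (∀ g h, 𝒢.comp g h → ∀ x ∈ D (𝒢.inv h),
      act h x ∈ D (𝒢.inv g) ∩ D h → act g (act h x) = act (𝒢.mul g h) x)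

/-- A partial action of a groupoid on (all of) a set `Y`. -/
def IsSetPartialAction {Y : Type v} (𝒢 : AlgGroupoid G)
    (D : G → Set Y) (act : G → Y → Y) : Prop :=
  𝒢.IsPartialActionOn Set.univ D act

/-- A partial set action is global when `α_g ∘ α_h = α_{gh}` (as partially
defined maps) for every composable pair `(g, h)`. -/
def SetActionIsGlobal {Y : Type v} (𝒢 : AlgGroupoid G)
    (D : G → Set Y) (act : G → Y → Y) : Prop :=
  ∀ g h, 𝒢.comp g h →
    D (𝒢.inv (𝒢.mul g h)) = {x ∈ D (𝒢.inv h) | act h x ∈ D (𝒢.inv g)} ∧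
    ∀ x ∈ D (𝒢.inv (𝒢.mul g h)), act g (act h x) = act (𝒢.mul g h) x

end AlgGroupoid
/-- An `R`-semicategory with object type `Ob`: morphism `R`-modules
`Hom y x` (the morphisms *from `x` to `y`*, i.e. `_yC_x`) and an
associative `R`-bilinear composition (no identities required). -/
structure RSemicat (R : Type u) [CommRing R] (Ob : Type v) : Type (max u v (w + 1)) where
  Hom : Ob → Ob → Type w
  [homAdd : ∀ y x, AddCommGroup (Hom y x)]
  [homMod : ∀ y x, Module R (Hom y x)]
  comp : ∀ {z y x : Ob}, Hom z y → Hom y x → Hom z x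
  comp_assoc : ∀ {v z y x : Ob} (f : Hom v z) (g : Hom z y) (h : Hom y x),
      comp (comp f g) h = comp f (comp g h)
  comp_add_left : ∀ {z y x : Ob} (f f' : Hom z y) (g : Hom y x),
      comp (f + f') g = comp f g + comp f' g
  comp_add_right : ∀ {z y x : Ob} (f : Hom z y) (g g' : Hom y x),
      comp f (g + g') = comp f g + comp f g'
  comp_smul_left : ∀ {z y x : Ob} (c : R) (f : Hom z y) (g : Hom y x),
      comp (c • f) g = c • comp f g
  comp_smul_right : ∀ {z y x : Ob} (c : R) (f : Hom z y) (g : Hom y x),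
      comp f (c • g) = c • comp f g

attribute [instance] RSemicat.homAdd RSemicat.homMod

namespace RSemicat

variable {R : Type u} [CommRing R] {Ob : Type v}

theorem comp_zero_left (C : RSemicat.{u, v, w} R Ob) {z y x : Ob} (g : C.Hom y x) :
    C.comp (0 : C.Hom z y) g = 0 := by
  have h := C.comp_add_left (0 : C.Hom z y) 0 g
  rw [add_zero] at h
  exact left_eq_add.mp h

theorem comp_zero_right (C : RSemicat.{u, v, w} R Ob) {z y x : Ob} (f : C.Hom z y) :
    C.comp f (0 : C.Hom y x) = 0 := by
  have h := C.comp_add_right f (0 : C.Hom y x) 0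
  rw [add_zero] at h
  exact left_eq_add.mp h

/-- An ideal of an `R`-semicategory: a family of submodules closed under
composition with arbitrary morphisms on either side. -/
def IsIdeal (C : RSemicat R Ob) (I : ∀ y x : Ob, Submodule R (C.Hom y x)) : Prop :=
  (∀ (z y x : Ob) (u : C.Hom z y) (f : C.Hom y x), f ∈ I y x → C.comp u f ∈ I z x) ∧
  (∀ (z y x : Ob) (f : C.Hom z y) (u : C.Hom y x), f ∈ I z y → C.comp f u ∈ I z x)

/-- `J` is an ideal of the ideal `I`: `J ⊆ I` and `J` is closed under
composition with morphisms of `I` on either side. -/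
def IsIdealIn (C : RSemicat R Ob) (J I : ∀ y x : Ob, Submodule R (C.Hom y x)) : Prop :=
  (∀ y x, J y x ≤ I y x) ∧
  (∀ (z y x : Ob) (u : C.Hom z y) (f : C.Hom y x), u ∈ I z y → f ∈ J y x → C.comp u f ∈ J z x) ∧
  (∀ (z y x : Ob) (f : C.Hom z y) (u : C.Hom y x), f ∈ J z y → u ∈ I y x → C.comp f u ∈ J z x)

/-- `u ∈ _xI_x` is a local identity of the ideal `I` at the object `x`. -/
def IsLocalIdentity (C : RSemicat R Ob) (I : ∀ y x : Ob, Submodule R (C.Hom y x))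
    (x : Ob) (u : C.Hom x x) : Prop :=
  (∀ (y : Ob) (f : C.Hom x y), f ∈ I x y → C.comp u f = f) ∧
  (∀ (y : Ob) (f : C.Hom y x), f ∈ I y x → C.comp f u = f)

/-- `u ∈ _xI_x` is a left local identity of the ideal `I` at the object `x`. -/
def IsLeftLocalIdentity (C : RSemicat R Ob) (I : ∀ y x : Ob, Submodule R (C.Hom y x))
    (x : Ob) (u : C.Hom x x) : Prop :=
  ∀ (y : Ob) (f : C.Hom x y), f ∈ I x y → C.comp u f = f

/-- An `R`-semicategory is an `R`-category when every object has an
identity morphism. -/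
def HasIdentities (C : RSemicat R Ob) : Prop :=
  ∀ x : Ob, ∃ u : C.Hom x x,
    (∀ (y : Ob) (f : C.Hom x y), C.comp u f = f) ∧
    (∀ (y : Ob) (f : C.Hom y x), C.comp f u = f)

end RSemicat

/-- The raw data of a partial action of a groupoid (with morphism type `G`)
on an `R`-semicategory `C`: domains `D₀ g` and (total extensions of) maps
`act₀ g` on objects, a family of submodules `I g` (the ideals `I^g`) and
(total extensions of) maps `act g : I^{g⁻¹} → I^g` on morphisms. -/
structure SemicatActionData (R : Type u) [CommRing R] (G : Type u₂) {Ob : Type v}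
    (C : RSemicat.{u, v, w} R Ob) where
  D₀ : G → Set Ob
  act₀ : G → Ob → Ob
  I : G → ∀ y x : Ob, Submodule R (C.Hom y x)
  act : ∀ (g : G) {y x : Ob}, C.Hom y x → C.Hom (act₀ g y) (act₀ g x)

variable {R : Type u} [CommRing R] {G : Type u₂} {Ob : Type v}

/-- Definition of a partial action of a groupoid `𝒢` on an `R`-semicategory `C`. -/
def IsSemicatPartialAction (𝒢 : AlgGroupoid G) (C : RSemicat.{u, v, w} R Ob)
    (a : SemicatActionData R G C) : Prop :=
  -- (i) a partial action on the set of objects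
  𝒢.IsSetPartialAction a.D₀ a.act₀ ∧
  -- (ii) `_yI^g_x = 0` unless `{y, x} ⊆ C₀^g`
  (∀ (g : G) (y x : Ob), ¬(y ∈ a.D₀ g ∧ x ∈ a.D₀ g) → a.I g y x = ⊥) ∧
  -- `I^g ⊴ I^{r g} ⊴ C`
  (∀ g : G, C.IsIdealIn (a.I g) (a.I (𝒢.r g))) ∧
  (∀ g : G, C.IsIdeal (a.I (𝒢.r g))) ∧
  -- (iii) `α^g : I^{g⁻¹} → I^g` is an isomorphism of `R`-semicategories
  (∀ (g : G) (y x : Ob) (f : C.Hom y x), f ∈ a.I (𝒢.inv g) y x →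
      a.act g f ∈ a.I g (a.act₀ g y) (a.act₀ g x)) ∧
  (∀ (g : G) (y x : Ob) (f f' : C.Hom y x), f ∈ a.I (𝒢.inv g) y x →
      f' ∈ a.I (𝒢.inv g) y x → a.act g (f + f') = a.act g f + a.act g f') ∧
  (∀ (g : G) (y x : Ob) (c : R) (f : C.Hom y x), f ∈ a.I (𝒢.inv g) y x →
      a.act g (c • f) = c • a.act g f) ∧
  (∀ (g : G) (y x : Ob) (f f' : C.Hom y x), f ∈ a.I (𝒢.inv g) y x →
      f' ∈ a.I (𝒢.inv g) y x → a.act g f = a.act g f' → f = f') ∧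
  (∀ g : G, ∀ y ∈ a.D₀ (𝒢.inv g), ∀ x ∈ a.D₀ (𝒢.inv g),
      ∀ k ∈ a.I g (a.act₀ g y) (a.act₀ g x), ∃ f ∈ a.I (𝒢.inv g) y x, a.act g f = k) ∧
  (∀ (g : G) (z y x : Ob) (f : C.Hom z y) (f' : C.Hom y x), f ∈ a.I (𝒢.inv g) z y →
      f' ∈ a.I (𝒢.inv g) y x → a.act g (C.comp f f') = C.comp (a.act g f) (a.act g f')) ∧
  -- (iv) `α^e = id` on `I^e` for identities `e`
  (∀ e ∈ 𝒢.units, ∀ (y x : Ob) (f : C.Hom y x), f ∈ a.I e y x → HEq (a.act e f) f) ∧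
  -- (v)
  (∀ g h : G, 𝒢.comp g h → ∀ (y x : Ob) (f : C.Hom y x),
      f ∈ a.I h y x → f ∈ a.I (𝒢.inv g) y x →
      a.act (𝒢.inv h) f ∈
        a.I (𝒢.inv (𝒢.mul g h)) (a.act₀ (𝒢.inv h) y) (a.act₀ (𝒢.inv h) x)) ∧
  -- (vi) `α^g ∘ α^h = α^{gh}` on `α^{h⁻¹}(I^h ∩ I^{g⁻¹})`
  (∀ g h : G, 𝒢.comp g h → ∀ (y x : Ob) (f : C.Hom y x), f ∈ a.I (𝒢.inv h) y x →
      a.act h f ∈ a.I (𝒢.inv g) (a.act₀ h y) (a.act₀ h x) →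
      HEq (a.act g (a.act h f)) (a.act (𝒢.mul g h) f))

/-- A partial action of a groupoid on an `R`-semicategory is global when
`α^g ∘ α^h = α^{gh}` and `α₀^g ∘ α₀^h = α₀^{gh}` for every composable pair. -/
def SemicatActionIsGlobal (𝒢 : AlgGroupoid G) (C : RSemicat.{u, v, w} R Ob)
    (a : SemicatActionData R G C) : Prop :=
  𝒢.SetActionIsGlobal a.D₀ a.act₀ ∧
  ∀ g h : G, 𝒢.comp g h → ∀ (y x : Ob) (f : C.Hom y x),
    (f ∈ a.I (𝒢.inv (𝒢.mul g h)) y x ↔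
      f ∈ a.I (𝒢.inv h) y x ∧ a.act h f ∈ a.I (𝒢.inv g) (a.act₀ h y) (a.act₀ h x)) ∧
    (f ∈ a.I (𝒢.inv (𝒢.mul g h)) y x → HEq (a.act g (a.act h f)) (a.act (𝒢.mul g h) f))
section Skew

variable (𝒢 : AlgGroupoid G)

/-- The product of homogeneous components in the (possibly non-associative)
partial skew groupoid semicategory `C ∗_α 𝒢`:
for `f ∈ _zI^t_{ty}` and `l ∈ _yI^g_{gx}` the product is
`α^t(α^{t⁻¹}(f) ∘ l) ∈ _zI^{tg}_{(tg)x}` when `(t, g)` is composable and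
`x ∈ C₀^{(tg)⁻¹}`, and `0` otherwise. -/
def skewMul (C : RSemicat.{u, v, w} R Ob) (a : SemicatActionData R G C) (t g : G)
    {z y x : Ob} (f : C.Hom z (a.act₀ t y)) (l : C.Hom y (a.act₀ g x)) :
    C.Hom z (a.act₀ (𝒢.mul t g) x) :=
  if h : 𝒢.comp t g ∧ x ∈ a.D₀ (𝒢.inv (𝒢.mul t g)) ∧
      a.act₀ (𝒢.inv t) (a.act₀ t y) = y ∧ a.act₀ t (a.act₀ (𝒢.inv t) z) = z ∧
      a.act₀ t (a.act₀ g x) = a.act₀ (𝒢.mul t g) x then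
    cast (by rw [h.2.2.2.1, h.2.2.2.2])
      (a.act t (C.comp (cast (by rw [h.2.2.1]) (a.act (𝒢.inv t) f)) l))
  else 0

/-- Associativity of the partial skew groupoid semicategory `C ∗_α 𝒢`:
`(f l) k = f (l k)` on homogeneous components. -/
def SkewAssoc (C : RSemicat.{u, v, w} R Ob) (a : SemicatActionData R G C) : Prop :=
  ∀ (t g h : G) (z y x u : Ob),
    y ∈ a.D₀ (𝒢.inv t) → x ∈ a.D₀ (𝒢.inv g) → u ∈ a.D₀ (𝒢.inv h) →
    ∀ (f : C.Hom z (a.act₀ t y)) (l : C.Hom y (a.act₀ g x)) (k : C.Hom x (a.act₀ h u)),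
      f ∈ a.I t z (a.act₀ t y) → l ∈ a.I g y (a.act₀ g x) → k ∈ a.I h x (a.act₀ h u) →
      HEq (skewMul 𝒢 C a (𝒢.mul t g) h (skewMul 𝒢 C a t g f l) k)
          (skewMul 𝒢 C a t (𝒢.mul g h) f (skewMul 𝒢 C a g h l k))

end Skew

section Algebra

/-- The underlying module of the `R`-algebra `a(C) = ⊕_{x,y ∈ C₀} _yC_x`. -/
abbrev aHom (C : RSemicat.{u, v, w} R Ob) : Type (max v w) :=
  Π₀ p : Ob × Ob, C.Hom p.1 p.2

/-- The multiplication of the `R`-algebra `a(C)`: the matrix product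
induced by the composition of `C`. -/
def aMul (C : RSemicat.{u, v, w} R Ob) (F K : aHom C) : aHom C :=
  DFinsupp.sum F fun p v => DFinsupp.sum K fun q w =>
    if h : p.2 = q.1 then
      DFinsupp.single (⟨p.1, q.2⟩ : Ob × Ob) (C.comp v (cast (by rw [h]) w : C.Hom p.2 q.2))
    else 0

/-- `a(C)_g = ⊕_{x,y} _yI^g_x` as a subset of `a(C)`. -/
def aIdealSet (C : RSemicat.{u, v, w} R Ob) (a : SemicatActionData R G C) (g : G) :
    Set (aHom C) :=
  {F | ∀ p : Ob × Ob, F p ∈ a.I g p.1 p.2}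

/-- The map `a(C)_{g⁻¹} → a(C)_g` induced componentwise by `α^g`. -/
def aAct {C : RSemicat.{u, v, w} R Ob} (a : SemicatActionData R G C) (g : G)
    (F : aHom C) : aHom C :=
  DFinsupp.sum F fun p v =>
    DFinsupp.single (⟨a.act₀ g p.1, a.act₀ g p.2⟩ : Ob × Ob) (a.act g v)

/-- A multiplier `(Rm, Lm)` of the (possibly non-unital) "ring" given by a
multiplication `mul` on the subset `A` of an additive group `M`. -/
def IsMultiplierOn {M : Type*} [AddCommGroup M] (mul : M → M → M) (A : Set M)
    (Rm Lm : M → M) : Prop :=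
  (∀ a ∈ A, Rm a ∈ A) ∧ (∀ a ∈ A, Lm a ∈ A) ∧
  (∀ a ∈ A, ∀ b ∈ A, Rm (a + b) = Rm a + Rm b) ∧
  (∀ a ∈ A, ∀ b ∈ A, Lm (a + b) = Lm a + Lm b) ∧
  (∀ a ∈ A, ∀ b ∈ A, Rm (mul a b) = mul a (Rm b)) ∧
  (∀ a ∈ A, ∀ b ∈ A, Lm (mul a b) = mul (Lm a) b) ∧
  (∀ a ∈ A, ∀ b ∈ A, mul (Rm a) b = mul a (Lm b))

/-- `(L, R)`-associativity: for any two multipliers `(Rm, Lm)` and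
`(Rm', Lm')` one has `Rm ∘ Lm' = Lm' ∘ Rm`. -/
def IsLRAssocOn {M : Type*} [AddCommGroup M] (mul : M → M → M) (A : Set M) : Prop :=
  ∀ Rm Lm Rm' Lm', IsMultiplierOn mul A Rm Lm → IsMultiplierOn mul A Rm' Lm' →
    ∀ a ∈ A, Rm (Lm' a) = Lm' (Rm a)

/-- `J` is a two-sided ideal of the "ring" `I ⊆ M` (with multiplication `mul`). -/
def IsRingIdealPair {M : Type*} [AddCommGroup M] (mul : M → M → M) (J I : Set M) : Prop :=
  J ⊆ I ∧ (0 : M) ∈ J ∧ (∀ a ∈ J, ∀ b ∈ J, a + b ∈ J) ∧ (∀ a ∈ J, -a ∈ J) ∧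
  (∀ a ∈ I, ∀ b ∈ J, mul a b ∈ J ∧ mul b a ∈ J)

/-- A partial action of a groupoid `𝒢` on the (possibly non-unital) ring
`(M, mul)`: ideals `D (r g) ⊴ M`, `D g ⊴ D (r g)` and ring isomorphisms
`act g : D g⁻¹ → D g` satisfying the partial action axioms. -/
def IsRingPartialAction {M : Type*} [AddCommGroup M] (𝒢 : AlgGroupoid G)
    (mul : M → M → M) (D : G → Set M) (act : G → M → M) : Prop :=
  (∀ g, IsRingIdealPair mul (D (𝒢.r g)) Set.univ) ∧
  (∀ g, IsRingIdealPair mul (D g) (D (𝒢.r g))) ∧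
  (∀ g, ∀ x ∈ D (𝒢.inv g), act g x ∈ D g) ∧
  (∀ g, ∀ x ∈ D (𝒢.inv g), act (𝒢.inv g) (act g x) = x) ∧
  (∀ g, ∀ y ∈ D g, ∃ x ∈ D (𝒢.inv g), act g x = y) ∧
  (∀ g, ∀ x ∈ D (𝒢.inv g), ∀ y ∈ D (𝒢.inv g), act g (x + y) = act g x + act g y) ∧
  (∀ g, ∀ x ∈ D (𝒢.inv g), ∀ y ∈ D (𝒢.inv g), act g (mul x y) = mul (act g x) (act g y)) ∧
  (∀ e ∈ 𝒢.units, ∀ x ∈ D e, act e x = x) ∧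
  (∀ g h, 𝒢.comp g h → ∀ x, x ∈ D (𝒢.inv g) → x ∈ D h →
      act (𝒢.inv h) x ∈ D (𝒢.inv (𝒢.mul g h))) ∧
  (∀ g h, 𝒢.comp g h → ∀ x ∈ D (𝒢.inv h), act h x ∈ D (𝒢.inv g) →
      act g (act h x) = act (𝒢.mul g h) x)

/-- A partial ring action is global when `α_g ∘ α_h = α_{gh}` for every
composable pair. -/
def RingActionIsGlobal {M : Type*} (𝒢 : AlgGroupoid G)
    (D : G → Set M) (act : G → M → M) : Prop :=
  ∀ g h, 𝒢.comp g h →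
    (∀ x, x ∈ D (𝒢.inv (𝒢.mul g h)) ↔ x ∈ D (𝒢.inv h) ∧ act h x ∈ D (𝒢.inv g)) ∧
    (∀ x ∈ D (𝒢.inv (𝒢.mul g h)), act g (act h x) = act (𝒢.mul g h) x)

end Algebra
section Globalization

variable {Ob' : Type v'}

/-- Membership in the image ideal `φ(I)` (inside the semicategory `D`),
with the convention that its components vanish away from the image of `ι`. -/
def ImageMem (C : RSemicat.{u, v, w} R Ob) (D : RSemicat.{u, v', w'} R Ob') (ι : Ob → Ob')
    (I : ∀ y x : Ob, Submodule R (C.Hom y x))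
    (φ : ∀ {y x : Ob}, C.Hom y x → D.Hom (ι y) (ι x))
    {z x' : Ob'} (k : D.Hom z x') : Prop :=
  k = 0 ∨ ∃ (y x : Ob) (f : C.Hom y x), f ∈ I y x ∧ ι y = z ∧ ι x = x' ∧ HEq (φ f) k

/-- The data of a (candidate) globalization of a partial action on `C`:
a global action on the semicategory `D`, an inclusion `ι : C₀ → D₀` of object
sets, and semifunctors `φ_e : I^e → J^e` acting as `ι` on objects. -/
structure GlobalizationData (R : Type u) [CommRing R] (G : Type u₂) {Ob : Type v}
    {Ob' : Type v'} (C : RSemicat.{u, v, w} R Ob) (D : RSemicat.{u, v', w'} R Ob') where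
  b : SemicatActionData R G D
  ι : Ob → Ob'
  φ : ∀ (e : G) {y x : Ob}, C.Hom y x → D.Hom (ι y) (ι x)

/-- `(D, β, (φ_e))` is a globalization of the partial groupoid action
`(C, α)` (Definition 3.2 of the paper). -/
def IsGlobalization (𝒢 : AlgGroupoid G) (C : RSemicat.{u, v, w} R Ob)
    (a : SemicatActionData R G C) (D : RSemicat.{u, v', w'} R Ob')
    (gd : GlobalizationData R G C D) : Prop :=
  Function.Injective gd.ι ∧
  -- β is a global action of 𝒢 on D
  IsSemicatPartialAction 𝒢 D gd.b ∧
  SemicatActionIsGlobal 𝒢 D gd.b ∧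
  -- (i) the object-level action β₀ is a globalization of α₀
  (∀ e ∈ 𝒢.units, ∀ x : Ob, x ∈ a.D₀ e ↔ gd.ι x ∈ gd.b.D₀ e) ∧
  (∀ g : G, ∀ x : Ob, x ∈ a.D₀ g ↔
      (gd.ι x ∈ gd.b.D₀ (𝒢.r g) ∧
        ∃ x' : Ob, gd.ι x' ∈ gd.b.D₀ (𝒢.d g) ∧ gd.b.act₀ g (gd.ι x') = gd.ι x)) ∧
  (∀ g : G, ∀ x ∈ a.D₀ (𝒢.inv g), gd.ι (a.act₀ g x) = gd.b.act₀ g (gd.ι x)) ∧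
  -- (ii) each φ_e is a faithful semifunctor with φ_e(I^e) ⊴ J^e
  (∀ e ∈ 𝒢.units,
    (∀ (y x : Ob) (f f' : C.Hom y x), f ∈ a.I e y x → f' ∈ a.I e y x →
        gd.φ e (f + f') = gd.φ e f + gd.φ e f') ∧
    (∀ (y x : Ob) (c : R) (f : C.Hom y x), f ∈ a.I e y x →
        gd.φ e (c • f) = c • gd.φ e f) ∧
    (∀ (z y x : Ob) (f : C.Hom z y) (f' : C.Hom y x), f ∈ a.I e z y → f' ∈ a.I e y x →
        gd.φ e (C.comp f f') = D.comp (gd.φ e f) (gd.φ e f')) ∧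
    (∀ (y x : Ob) (f f' : C.Hom y x), f ∈ a.I e y x → f' ∈ a.I e y x →
        gd.φ e f = gd.φ e f' → f = f') ∧
    (∀ (y x : Ob) (f : C.Hom y x), f ∈ a.I e y x →
        gd.φ e f ∈ gd.b.I e (gd.ι y) (gd.ι x))) ∧
  (∀ e ∈ 𝒢.units, ∀ (w z x' : Ob') (u : D.Hom w z) (k : D.Hom z x'),
      u ∈ gd.b.I e w z → ImageMem C D gd.ι (a.I e) (gd.φ e) k →
      ImageMem C D gd.ι (a.I e) (gd.φ e) (D.comp u k)) ∧
  (∀ e ∈ 𝒢.units, ∀ (z x' w : Ob') (k : D.Hom z x') (u : D.Hom x' w),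
      ImageMem C D gd.ι (a.I e) (gd.φ e) k → u ∈ gd.b.I e x' w →
      ImageMem C D gd.ι (a.I e) (gd.φ e) (D.comp k u)) ∧
  -- (iii) φ_{r g}(_yI^g_x) = φ_{r g}(_yI^{r g}_x) ∩ β^g(φ_{d g}(_{g⁻¹y}I^{d g}_{g⁻¹x}))
  (∀ g : G, ∀ y ∈ a.D₀ g, ∀ x ∈ a.D₀ g, ∀ k : D.Hom (gd.ι y) (gd.ι x),
      (∃ f ∈ a.I g y x, gd.φ (𝒢.r g) f = k) ↔
        ((∃ f ∈ a.I (𝒢.r g) y x, gd.φ (𝒢.r g) f = k) ∧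
          ∃ f' : C.Hom (a.act₀ (𝒢.inv g) y) (a.act₀ (𝒢.inv g) x),
            f' ∈ a.I (𝒢.d g) (a.act₀ (𝒢.inv g) y) (a.act₀ (𝒢.inv g) x) ∧
            HEq (gd.b.act g (gd.φ (𝒢.d g) f')) k)) ∧
  -- (iv) β^g ∘ φ_{d g} = φ_{r g} ∘ α^g on I^{g⁻¹}
  (∀ (g : G) (y x : Ob) (f : C.Hom y x), f ∈ a.I (𝒢.inv g) y x →
      HEq (gd.b.act g (gd.φ (𝒢.d g) f)) (gd.φ (𝒢.r g) (a.act g f))) ∧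
  -- (v) _yJ^g_x = Σ_{r h = r g} β^h(φ_{d h}(_{h⁻¹y}I^{d h}_{h⁻¹x}))
  (∀ (g : G) (y x : Ob'), gd.b.I g y x = Submodule.span R
      {m : D.Hom y x | ∃ h : G, 𝒢.r h = 𝒢.r g ∧
        ∃ (y' x' : Ob) (f : C.Hom y' x'), f ∈ a.I (𝒢.d h) y' x' ∧
          gd.ι y' = gd.b.act₀ (𝒢.inv h) y ∧ gd.ι x' = gd.b.act₀ (𝒢.inv h) x ∧
          HEq (gd.b.act h (gd.φ (𝒢.d h) f)) m})

/-- The ring homomorphism `ψ_e : a(C) → a(D)` induced componentwise by a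
semifunctor `φ_e`. -/
def aPhiRing {C : RSemicat.{u, v, w} R Ob} {D : RSemicat.{u, v', w'} R Ob'}
    (ι : Ob → Ob') (φ : ∀ (e : G) {y x : Ob}, C.Hom y x → D.Hom (ι y) (ι x))
    (e : G) (F : aHom C) : aHom D :=
  DFinsupp.sum F fun p v => DFinsupp.single (⟨ι p.1, ι p.2⟩ : Ob' × Ob') (φ e v)

/-- A global action `(DN, actN)` of `𝒢` on the ring `(N, mulN)` is a
globalization of the partial ring action `(DM, actM)` of `𝒢` on `(M, mulM)`
via the ring monomorphisms `ψ_e` (Definition 3.1 of the paper). -/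
def IsRingGlobalization {M N : Type*} [AddCommGroup M] [AddCommGroup N]
    (𝒢 : AlgGroupoid G)
    (mulM : M → M → M) (DM : G → Set M) (actM : G → M → M)
    (mulN : N → N → N) (DN : G → Set N) (actN : G → N → N)
    (ψ : G → M → N) : Prop :=
  IsRingPartialAction 𝒢 mulN DN actN ∧
  RingActionIsGlobal 𝒢 DN actN ∧
  (∀ e ∈ 𝒢.units,
    (∀ x ∈ DM e, ψ e x ∈ DN e) ∧
    (∀ x ∈ DM e, ∀ y ∈ DM e, ψ e (x + y) = ψ e x + ψ e y) ∧
    (∀ x ∈ DM e, ∀ y ∈ DM e, ψ e (mulM x y) = mulN (ψ e x) (ψ e y)) ∧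
    (∀ x ∈ DM e, ∀ y ∈ DM e, ψ e x = ψ e y → x = y) ∧
    -- (i) ψ_e(A_e) is an ideal of B_e
    IsRingIdealPair mulN (ψ e '' DM e) (DN e)) ∧
  -- (ii)
  (∀ g : G, ψ (𝒢.r g) '' DM g =
      (ψ (𝒢.r g) '' DM (𝒢.r g)) ∩ (actN g '' (ψ (𝒢.d g) '' DM (𝒢.d g)))) ∧
  -- (iii)
  (∀ g : G, ∀ x ∈ DM (𝒢.inv g), actN g (ψ (𝒢.d g) x) = ψ (𝒢.r g) (actM g x)) ∧
  -- (iv)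
  (∀ g : G, ∀ k : N, k ∈ DN g ↔ k ∈ AddSubgroup.closure
      {m : N | ∃ h : G, 𝒢.r h = 𝒢.r g ∧ ∃ F ∈ DM (𝒢.d h), m = actN h (ψ (𝒢.d h) F)})

end Globalization

section Orbits

/-- The orbit relation induced by a partial action of a groupoid: `e ∼ f`
iff `f = g e` for some morphism `g` with `e` in the domain of `α_g`. -/
def orbRel {Y : Type*} (𝒢 : AlgGroupoid G) (D : G → Set Y) (act : G → Y → Y)
    (e f : Y) : Prop :=
  ∃ g : G, e ∈ D (𝒢.inv g) ∧ act g e = f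

/-- `C(ρ,τ)_g = ⊕_{x ∈ ρ, y ∈ τ} _yI^g_x`, realized inside `a(C)`. -/
def CSet (C : RSemicat.{u, v, w} R Ob) (a : SemicatActionData R G C)
    (ρ τ : Set Ob) (g : G) : Set (aHom C) :=
  {F | ∀ p : Ob × Ob, F p ∈ a.I g p.1 p.2 ∧ (F p ≠ 0 → p.1 ∈ τ ∧ p.2 ∈ ρ)}

end Orbits
section SkewCatAlgebra

/-- The morphism module `_y(C∗_α𝒢)_x = ⊕_{g} _yI^g_{gx}` of the partial skew
groupoid semicategory (realized as a direct sum over all of `G`; the genuine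
morphisms are those supported on `𝒢^x` with components in `I^g`). -/
abbrev SkewHomT (C : RSemicat.{u, v, w} R Ob) (a : SemicatActionData R G C)
    (y x : Ob) : Type (max u₂ w) :=
  Π₀ g : G, C.Hom y (a.act₀ g x)

/-- Composition in the partial skew groupoid semicategory `C∗_α𝒢`. -/
def skewHomMul (𝒢 : AlgGroupoid G) (C : RSemicat.{u, v, w} R Ob)
    (a : SemicatActionData R G C) {z y x : Ob}
    (F : SkewHomT C a z y) (K : SkewHomT C a y x) : SkewHomT C a z x :=
  DFinsupp.sum F fun t f => DFinsupp.sum K fun g l =>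
    DFinsupp.single (𝒢.mul t g) (skewMul 𝒢 C a t g f l)

/-- The underlying module of the algebra `a(C∗_α𝒢)`. -/
abbrev aSkewT (C : RSemicat.{u, v, w} R Ob) (a : SemicatActionData R G C) :
    Type (max v u₂ w) :=
  Π₀ p : Ob × Ob, SkewHomT C a p.1 p.2

/-- The multiplication of the algebra `a(C∗_α𝒢)`. -/
def aSkewMul (𝒢 : AlgGroupoid G) (C : RSemicat.{u, v, w} R Ob)
    (a : SemicatActionData R G C) (F K : aSkewT C a) : aSkewT C a :=
  DFinsupp.sum F fun p u => DFinsupp.sum K fun q v =>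
    if h : p.2 = q.1 then
      DFinsupp.single (⟨p.1, q.2⟩ : Ob × Ob)
        (skewHomMul 𝒢 C a u (cast (by rw [h]) v : SkewHomT C a p.2 q.2))
    else 0

/-- The set of genuine elements of `a(C∗_α𝒢)` inside `aSkewT`. -/
def aSkewSet (𝒢 : AlgGroupoid G) (C : RSemicat.{u, v, w} R Ob)
    (a : SemicatActionData R G C) : Set (aSkewT C a) :=
  {F | ∀ (p : Ob × Ob) (g : G), F p g ∈ a.I g p.1 (a.act₀ g p.2) ∧
    (p.2 ∉ a.D₀ (𝒢.inv g) → F p g = 0)}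

/-- The underlying module of the partial skew groupoid ring
`a(C)∗_α𝒢 = ⊕_g a(C)_g δ_g`. -/
abbrev sRingT (G : Type u₂) (C : RSemicat.{u, v, w} R Ob) : Type (max v u₂ w) :=
  Π₀ _g : G, aHom C

/-- The multiplication of the partial skew groupoid ring `a(C)∗_α𝒢`:
`(a_g δ_g)(b_h δ_h) = α_g(α_{g⁻¹}(a_g) b_h) δ_{gh}` when `(g,h)` is
composable, and `0` otherwise. -/
def sRingMul (𝒢 : AlgGroupoid G) (C : RSemicat.{u, v, w} R Ob)
    (a : SemicatActionData R G C) (F K : sRingT G C) : sRingT G C :=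
  DFinsupp.sum F fun g ag => DFinsupp.sum K fun h bh =>
    if 𝒢.comp g h then
      DFinsupp.single (𝒢.mul g h) (aAct a g (aMul C (aAct a (𝒢.inv g) ag) bh))
    else 0

/-- The set of genuine elements of `a(C)∗_α𝒢` inside `sRingT`. -/
def sRingSet (C : RSemicat.{u, v, w} R Ob) (a : SemicatActionData R G C) :
    Set (sRingT G C) :=
  {K | ∀ (g : G) (p : Ob × Ob), K g p ∈ a.I g p.1 p.2}

/-- The isomorphism `a(C∗_α𝒢) → a(C)∗_α𝒢`, `f_g ↦ f_g δ_g`. -/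
def aPhi (C : RSemicat.{u, v, w} R Ob) (a : SemicatActionData R G C)
    (F : aSkewT C a) : sRingT G C :=
  DFinsupp.sum F fun p u => DFinsupp.sum u fun g f =>
    DFinsupp.single g (DFinsupp.single (⟨p.1, a.act₀ g p.2⟩ : Ob × Ob) f)

end SkewCatAlgebra

section Graded

/-- A `𝒢`-grading of an `R`-semicategory `B`: decompositions
`_yB_x = ⊕_{g} _yB_x^g` such that `_zB_y^t ⬝ _yB_x^s ⊆ _zB_x^{ts}` when
`d t = r s` and `_zB_y^t ⬝ _yB_x^s = 0` otherwise. -/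
def IsGrading (𝒢 : AlgGroupoid G) (B : RSemicat.{u, v, w} R Ob)
    (deco : ∀ y x : Ob, G → Submodule R (B.Hom y x)) : Prop :=
  (∀ y x : Ob, DirectSum.IsInternal fun g : G => deco y x g) ∧
  (∀ (z y x : Ob) (t s : G), 𝒢.comp t s → ∀ u ∈ deco z y t, ∀ v ∈ deco y x s,
      B.comp u v ∈ deco z x (𝒢.mul t s)) ∧
  (∀ (z y x : Ob) (t s : G), ¬ 𝒢.comp t s → ∀ u ∈ deco z y t, ∀ v ∈ deco y x s,
      B.comp u v = 0)

/-- The morphism submodule `_{(y,t)}(B#𝒢)_{(x,s)}` of the smash product: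
`_yB_x^{t⁻¹ s}` when `r t = r s`, and `0` otherwise. -/
def smashMod (𝒢 : AlgGroupoid G) (B : RSemicat.{u, v, w} R Ob)
    (deco : ∀ y x : Ob, G → Submodule R (B.Hom y x))
    (yt xs : Ob × G) : Submodule R (B.Hom yt.1 xs.1) :=
  if 𝒢.r yt.2 = 𝒢.r xs.2 then deco yt.1 xs.1 (𝒢.mul (𝒢.inv yt.2) xs.2) else ⊥

/-- The smash product `R`-semicategory `B#𝒢`. -/
def Smash (𝒢 : AlgGroupoid G) (B : RSemicat.{u, v, w} R Ob)
    (deco : ∀ y x : Ob, G → Submodule R (B.Hom y x))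
    (hgr : IsGrading 𝒢 B deco) :
    RSemicat.{u, max v u₂, w} R (Ob × G) where
  Hom yt xs := ↥(smashMod 𝒢 B deco yt xs)
  comp {z y x} f g := ⟨B.comp f.1 g.1, by
    obtain ⟨fv, hf⟩ := f
    obtain ⟨gv, hg⟩ := g
    show B.comp fv gv ∈ smashMod 𝒢 B deco z x
    unfold smashMod at hf hg ⊢
    by_cases h1 : 𝒢.r z.2 = 𝒢.r y.2
    · by_cases h2 : 𝒢.r y.2 = 𝒢.r x.2
      · rw [if_pos h1] at hf
        rw [if_pos h2] at hg
        rw [if_pos (h1.trans h2)]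
        have c1 : 𝒢.comp (𝒢.inv z.2) y.2 :=
          (𝒢.comp_iff _ _).2 (by rw [𝒢.inv_inv']; exact h1)
        have c2 : 𝒢.comp (𝒢.inv y.2) x.2 :=
          (𝒢.comp_iff _ _).2 (by rw [𝒢.inv_inv']; exact h2)
        have ccy : 𝒢.comp y.2 (𝒢.inv y.2) := 𝒢.comp_inv_right y.2
        have ccyc : 𝒢.comp y.2 (𝒢.mul (𝒢.inv y.2) x.2) :=
          𝒢.comp_mul_right y.2 (𝒢.inv y.2) x.2 ccy c2
        have hcomp : 𝒢.comp (𝒢.mul (𝒢.inv z.2) y.2) (𝒢.mul (𝒢.inv y.2) x.2) :=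
          𝒢.comp_mul_left (𝒢.inv z.2) y.2 (𝒢.mul (𝒢.inv y.2) x.2) c1 ccyc
        have hmem := hgr.2.1 z.1 y.1 x.1 (𝒢.mul (𝒢.inv z.2) y.2)
          (𝒢.mul (𝒢.inv y.2) x.2) hcomp fv hf gv hg
        have h2' : 𝒢.mul y.2 (𝒢.inv y.2) = 𝒢.mul x.2 (𝒢.inv x.2) := h2
        have s5 : 𝒢.mul x.2 (𝒢.mul (𝒢.inv x.2) x.2) = x.2 := by
          have h5 := 𝒢.inv_mul_cancel' (𝒢.inv x.2) x.2 (𝒢.comp_inv_left x.2)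
          rwa [𝒢.inv_inv'] at h5
        have hidx : 𝒢.mul (𝒢.mul (𝒢.inv z.2) y.2) (𝒢.mul (𝒢.inv y.2) x.2) =
            𝒢.mul (𝒢.inv z.2) x.2 := by
          rw [𝒢.mul_assoc' (𝒢.inv z.2) y.2 (𝒢.mul (𝒢.inv y.2) x.2) c1 ccyc,
            ← 𝒢.mul_assoc' y.2 (𝒢.inv y.2) x.2 ccy c2, h2',
            𝒢.mul_assoc' x.2 (𝒢.inv x.2) x.2 (𝒢.comp_inv_right x.2) (𝒢.comp_inv_left x.2),
            s5]
        rw [hidx] at hmem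
        exact hmem
      · rw [if_neg h2] at hg
        have hg0 : gv = 0 := by simpa using hg
        rw [hg0, B.comp_zero_right]
        exact Submodule.zero_mem _
    · rw [if_neg h1] at hf
      have hf0 : fv = 0 := by simpa using hf
      rw [hf0, B.comp_zero_left]
      exact Submodule.zero_mem _⟩
  comp_assoc f g h := Subtype.ext (B.comp_assoc f.1 g.1 h.1)
  comp_add_left f f' g := Subtype.ext (B.comp_add_left f.1 f'.1 g.1)
  comp_add_right f g g' := Subtype.ext (B.comp_add_right f.1 g.1 g'.1)
  comp_smul_left c f g := Subtype.ext (B.comp_smul_left c f.1 g.1)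
  comp_smul_right c f g := Subtype.ext (B.comp_smul_right c f.1 g.1)

/-- The object part of the global action of `𝒢` on `B#𝒢`:
`α₀^g (x, s) = (x, g s)`. -/
def smashAct₀ (𝒢 : AlgGroupoid G) (g : G) (p : Ob × G) : Ob × G :=
  (p.1, 𝒢.mul g p.2)

/-- The global action of `𝒢` on the smash product `B#𝒢` (domains
`B₀ × 𝒢(-, r g)`, `α₀^g(x,s) = (x, gs)`, ideals `_{(y,t)}I^g_{(x,s)}`
given by `_yB_x^{t⁻¹s}` when `r t = r s = r g` and `0` otherwise, and `α^g`
given by the identity on the underlying morphisms of `B`). -/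
def smashActionData (𝒢 : AlgGroupoid G) (B : RSemicat.{u, v, w} R Ob)
    (deco : ∀ y x : Ob, G → Submodule R (B.Hom y x))
    (hgr : IsGrading 𝒢 B deco) :
    SemicatActionData R G (Smash 𝒢 B deco hgr) where
  D₀ g := {p : Ob × G | 𝒢.r p.2 = 𝒢.r g}
  act₀ := smashAct₀ 𝒢
  I g yt xs := if 𝒢.r yt.2 = 𝒢.r g ∧ 𝒢.r xs.2 = 𝒢.r g then ⊤ else ⊥
  act g {yt xs} f :=
    if h : (f.1 : B.Hom yt.1 xs.1) ∈
        smashMod 𝒢 B deco (smashAct₀ 𝒢 g yt) (smashAct₀ 𝒢 g xs) then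
      ⟨f.1, h⟩
    else 0

end Graded

/-!
Since `α^g` acts as the identity on underlying morphisms of `B`, a morphism
`(x, s) → (y, t)` of `(B#𝒢) ∗_α 𝒢` is a finite family of components `F_g ∈ _yB_x^{t⁻¹gs}`,
indexed by `g ∈ _{r t}𝒢_{r s}`. Summing the components lands in `⊕_u _yB_x^u` with
`u ∈ _{d t}𝒢_{d s}`; since `g ↦ t⁻¹gs` is a bijection `_{r t}𝒢_{r s} → _{d t}𝒢_{d s}` with
inverse `u ↦ tus⁻¹`, independence of the grading makes this an isomorphism. The skew product
`α^k(α^{k⁻¹}(f) l)` of two components is just the composite `f l` in `B`, so summing is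
compatible with composition.
-/

namespace AlgGroupoid

variable (𝒢 : AlgGroupoid G)

theorem comp_of_d_eq_r {g h : G} (hgh : 𝒢.d g = 𝒢.r h) : 𝒢.comp g h := (𝒢.comp_iff g h).2 hgh

theorem d_inv (g : G) : 𝒢.d (𝒢.inv g) = 𝒢.r g := by
  rw [d, r, inv_inv']

theorem r_inv (g : G) : 𝒢.r (𝒢.inv g) = 𝒢.d g := by
  rw [d, r, inv_inv']

theorem d_mul {g h : G} (hgh : 𝒢.comp g h) : 𝒢.d (𝒢.mul g h) = 𝒢.d h := by
  rw [← 𝒢.r_inv h]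
  exact (𝒢.comp_iff _ _).1 (𝒢.comp_mul_left g h _ hgh (𝒢.comp_inv_right h))

theorem r_mul {g h : G} (hgh : 𝒢.comp g h) : 𝒢.r (𝒢.mul g h) = 𝒢.r g := by
  rw [← 𝒢.d_inv g]
  exact ((𝒢.comp_iff _ _).1 (𝒢.comp_mul_right _ g h (𝒢.comp_inv_left g) hgh)).symm

theorem mul_d (g : G) : 𝒢.mul g (𝒢.d g) = g := by
  simpa only [d, inv_inv'] using 𝒢.inv_mul_cancel' (𝒢.inv g) g (𝒢.comp_inv_left g)

theorem mul_inv_mul {g h : G} (hgh : 𝒢.r g = 𝒢.r h) : 𝒢.mul g (𝒢.mul (𝒢.inv g) h) = h := by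
  simpa only [inv_inv'] using
    𝒢.inv_mul_cancel' (𝒢.inv g) h (𝒢.comp_of_d_eq_r (by rw [d_inv, hgh]))

theorem inv_mul_mul_mul {g p q : G} (hp : 𝒢.d g = 𝒢.r p) (hq : 𝒢.d g = 𝒢.r q) :
    𝒢.mul (𝒢.inv (𝒢.mul g p)) (𝒢.mul g q) = 𝒢.mul (𝒢.inv p) q := by
  have hgp := 𝒢.comp_of_d_eq_r hp
  have hgq := 𝒢.comp_of_d_eq_r hq
  rw [𝒢.inv_mul' g p hgp, 𝒢.mul_assoc' _ _ _ (𝒢.comp_of_d_eq_r (by rw [d_inv, r_inv, hp]))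
    (𝒢.comp_of_d_eq_r (by rw [d_inv, r_mul _ hgq])), 𝒢.inv_mul_cancel' g q hgq]

section Translation

variable {s t : G}

theorem d_inv_mul_mul {g : G} (hs : 𝒢.d g = 𝒢.r s) (ht : 𝒢.r g = 𝒢.r t) :
    𝒢.d (𝒢.mul (𝒢.inv t) (𝒢.mul g s)) = 𝒢.d s := by
  have hgs := 𝒢.comp_of_d_eq_r hs
  rw [𝒢.d_mul (𝒢.comp_of_d_eq_r (by rw [d_inv, r_mul _ hgs, ht])), 𝒢.d_mul hgs]

theorem r_inv_mul_mul {g : G} (hs : 𝒢.d g = 𝒢.r s) (ht : 𝒢.r g = 𝒢.r t) :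
    𝒢.r (𝒢.mul (𝒢.inv t) (𝒢.mul g s)) = 𝒢.d t := by
  have hgs := 𝒢.comp_of_d_eq_r hs
  rw [𝒢.r_mul (𝒢.comp_of_d_eq_r (by rw [d_inv, r_mul _ hgs, ht])), r_inv]

theorem eq_of_inv_mul_mul_eq {g g' : G} (hs : 𝒢.d g = 𝒢.r s) (ht : 𝒢.r g = 𝒢.r t)
    (hs' : 𝒢.d g' = 𝒢.r s) (ht' : 𝒢.r g' = 𝒢.r t)
    (h : 𝒢.mul (𝒢.inv t) (𝒢.mul g s) = 𝒢.mul (𝒢.inv t) (𝒢.mul g' s)) : g = g' := by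
  have hgs := 𝒢.comp_of_d_eq_r hs
  have hgs' := 𝒢.comp_of_d_eq_r hs'
  have key := congrArg (𝒢.mul t) h
  rw [𝒢.mul_inv_mul (by rw [r_mul _ hgs, ht]), 𝒢.mul_inv_mul (by rw [r_mul _ hgs', ht'])] at key
  rw [← 𝒢.mul_inv_cancel' g s hgs, key, 𝒢.mul_inv_cancel' g' s hgs']

theorem exists_inv_mul_mul_eq {u : G} (hs : 𝒢.d u = 𝒢.d s) (ht : 𝒢.r u = 𝒢.d t) :
    ∃ g, 𝒢.d g = 𝒢.r s ∧ 𝒢.r g = 𝒢.r t ∧ 𝒢.mul (𝒢.inv t) (𝒢.mul g s) = u := by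
  have htu : 𝒢.comp t u := 𝒢.comp_of_d_eq_r ht.symm
  have hus : 𝒢.comp u (𝒢.inv s) := 𝒢.comp_of_d_eq_r (by rw [r_inv, hs])
  have htus := 𝒢.comp_mul_left t u _ htu hus
  refine ⟨𝒢.mul (𝒢.mul t u) (𝒢.inv s), by rw [d_mul _ htus, d_inv],
    by rw [r_mul _ htus, r_mul _ htu], ?_⟩
  rw [𝒢.mul_assoc' _ _ _ htus (𝒢.comp_inv_left s),
    show 𝒢.mul (𝒢.inv s) s = 𝒢.d (𝒢.mul t u) by rw [d_mul _ htu, hs]; rfl, mul_d,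
    𝒢.inv_mul_cancel' t u htu]

end Translation

end AlgGroupoid

namespace RSemicat

variable (C : RSemicat.{u, v, w} R Ob)

def compₗ (z y x : Ob) : C.Hom z y →ₗ[R] C.Hom y x →ₗ[R] C.Hom z x :=
  LinearMap.mk₂ R C.comp C.comp_add_left C.comp_smul_left C.comp_add_right C.comp_smul_right

theorem comp_sum_sum {z y x : Ob} {ι κ : Type*} (s : Finset ι) (s' : Finset κ)
    (f : ι → C.Hom z y) (f' : κ → C.Hom y x) :
    C.comp (∑ i ∈ s, f i) (∑ j ∈ s', f' j) = ∑ i ∈ s, ∑ j ∈ s', C.comp (f i) (f' j) := by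
  change C.compₗ z y x _ _ = ∑ i ∈ s, ∑ j ∈ s', C.compₗ z y x (f i) (f' j)
  simp only [map_sum, LinearMap.sum_apply]
  exact Finset.sum_comm

end RSemicat

theorem iSupIndep.eq_zero_of_sum_eq_zero_of_injOn {S ι α N : Type*} [Ring S] [AddCommGroup N]
    [Module S N] {p : ι → Submodule S N} (hp : iSupIndep p) {κ : α → ι} {s : Finset α}
    (hκ : Set.InjOn κ s) {v : α → N} (hv : ∀ a ∈ s, v a ∈ p (κ a))
    (hsum : ∑ a ∈ s, v a = 0) {a : α} (ha : a ∈ s) : v a = 0 := by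
  refine (iSupIndep_iff_finsetSum_eq_zero_imp_eq_zero _).1 (hp.comp hκ.injective) Finset.univ
    (fun b => v b) (fun b _ => hv b b.2) ?_ ⟨a, ha⟩ (Finset.mem_univ _)
  rw [← hsum]
  exact Finset.sum_coe_sort s v

/-- The morphisms `⊕_{g ∈ 𝒢^x} _yI^g_{gx}` of the skew groupoid semicategory `C ∗_α 𝒢`
inside `SkewHomT C a y x`. -/
def skewHoms (𝒢 : AlgGroupoid G) (C : RSemicat.{u, v, w} R Ob) (a : SemicatActionData R G C)
    (y x : Ob) : Submodule R (SkewHomT C a y x) where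
  carrier := {F | ∀ g, F g ∈ a.I g y (a.act₀ g x) ∧ (x ∉ a.D₀ (𝒢.inv g) → F g = 0)}
  zero_mem' g := ⟨Submodule.zero_mem _, fun _ => rfl⟩
  add_mem' hF hK g := ⟨Submodule.add_mem _ (hF g).1 (hK g).1,
    fun hx => by rw [DFinsupp.add_apply, (hF g).2 hx, (hK g).2 hx, add_zero]⟩
  smul_mem' c F hF g := ⟨Submodule.smul_mem _ c (hF g).1,
    fun hx => by rw [DFinsupp.smul_apply, (hF g).2 hx, smul_zero]⟩

theorem single_mem_skewHoms (𝒢 : AlgGroupoid G) (C : RSemicat.{u, v, w} R Ob)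
    (a : SemicatActionData R G C) {y x : Ob} {g : G} {m : C.Hom y (a.act₀ g x)}
    (hm : m ∈ a.I g y (a.act₀ g x)) (hx : x ∈ a.D₀ (𝒢.inv g)) :
    DFinsupp.single g m ∈ skewHoms 𝒢 C a y x := by
  intro g'
  by_cases hg : g' = g
  · subst hg
    rw [DFinsupp.single_eq_same]
    exact ⟨hm, absurd hx⟩
  · rw [DFinsupp.single_eq_of_ne hg]
    exact ⟨Submodule.zero_mem _, fun _ => rfl⟩

section SmashProduct

variable (𝒢 : AlgGroupoid G) (B : RSemicat.{u, v, w} R Ob)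
  (deco : ∀ y x : Ob, G → Submodule R (B.Hom y x)) (hgr : IsGrading 𝒢 B deco)

/-- `α^g` is the identity on morphisms because `(g t)⁻¹ (g s) = t⁻¹ s`. -/
theorem smashMod_smashAct₀ {g : G} {p q : Ob × G} (hp : 𝒢.d g = 𝒢.r p.2)
    (hq : 𝒢.d g = 𝒢.r q.2) :
    smashMod 𝒢 B deco (smashAct₀ 𝒢 g p) (smashAct₀ 𝒢 g q) = smashMod 𝒢 B deco p q := by
  change (if 𝒢.r (𝒢.mul g p.2) = 𝒢.r (𝒢.mul g q.2) then
    deco p.1 q.1 (𝒢.mul (𝒢.inv (𝒢.mul g p.2)) (𝒢.mul g q.2)) else ⊥) = smashMod 𝒢 B deco p q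
  rw [𝒢.r_mul (𝒢.comp_of_d_eq_r hp), 𝒢.r_mul (𝒢.comp_of_d_eq_r hq), 𝒢.inv_mul_mul_mul hp hq,
    if_pos rfl, smashMod, if_pos (hp.symm.trans hq)]

theorem smashActionData_act_val (g : G) {p q : Ob × G} (f : (Smash 𝒢 B deco hgr).Hom p q)
    (hp : 𝒢.d g = 𝒢.r p.2) (hq : 𝒢.d g = 𝒢.r q.2) :
    ((smashActionData 𝒢 B deco hgr).act g f).1 = f.1 := by
  have hf : f.1 ∈ smashMod 𝒢 B deco (smashAct₀ 𝒢 g p) (smashAct₀ 𝒢 g q) := by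
    rw [smashMod_smashAct₀ 𝒢 B deco hp hq]
    exact f.2
  have hact : (smashActionData 𝒢 B deco hgr).act g f = ⟨f.1, hf⟩ := dif_pos hf
  rw [hact]

theorem Smash.val_cast {p p' q q' : Ob × G} (hp : p = p') (hq : q = q')
    (e : (Smash 𝒢 B deco hgr).Hom p q = (Smash 𝒢 B deco hgr).Hom p' q')
    (f : (Smash 𝒢 B deco hgr).Hom p q) : HEq (cast e f).1 f.1 := by
  subst hp hq
  rfl

theorem skewMul_smash_val {x y z : Ob} {s t q k g : G}
    (hkt : 𝒢.d k = 𝒢.r t) (hkq : 𝒢.r k = 𝒢.r q) (hgs : 𝒢.d g = 𝒢.r s) (hgt : 𝒢.r g = 𝒢.r t)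
    (f : (Smash 𝒢 B deco hgr).Hom (z, q) ((smashActionData 𝒢 B deco hgr).act₀ k (y, t)))
    (l : (Smash 𝒢 B deco hgr).Hom (y, t) ((smashActionData 𝒢 B deco hgr).act₀ g (x, s))) :
    (skewMul 𝒢 (Smash 𝒢 B deco hgr) (smashActionData 𝒢 B deco hgr) k g f l).1 =
      B.comp f.1 l.1 := by
  have hkg : 𝒢.comp k g := 𝒢.comp_of_d_eq_r (hkt.trans hgt.symm)
  have hcond : 𝒢.comp k g ∧ (x, s) ∈ (smashActionData 𝒢 B deco hgr).D₀ (𝒢.inv (𝒢.mul k g)) ∧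
      (smashActionData 𝒢 B deco hgr).act₀ (𝒢.inv k)
        ((smashActionData 𝒢 B deco hgr).act₀ k (y, t)) = (y, t) ∧
      (smashActionData 𝒢 B deco hgr).act₀ k
        ((smashActionData 𝒢 B deco hgr).act₀ (𝒢.inv k) (z, q)) = (z, q) ∧
      (smashActionData 𝒢 B deco hgr).act₀ k ((smashActionData 𝒢 B deco hgr).act₀ g (x, s)) =
        (smashActionData 𝒢 B deco hgr).act₀ (𝒢.mul k g) (x, s) :=
    ⟨hkg, show 𝒢.r s = 𝒢.r (𝒢.inv (𝒢.mul k g)) by rw [𝒢.r_inv, 𝒢.d_mul hkg, hgs],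
      congrArg (Prod.mk y) (𝒢.inv_mul_cancel' k t (𝒢.comp_of_d_eq_r hkt)),
      congrArg (Prod.mk z) (𝒢.mul_inv_mul hkq),
      congrArg (Prod.mk x) (𝒢.mul_assoc' k g s hkg (𝒢.comp_of_d_eq_r hgs)).symm⟩
  rw [skewMul, dif_pos hcond]
  generalize_proofs e₁ e₂
  have hkq' : 𝒢.comp (𝒢.inv k) q := 𝒢.comp_of_d_eq_r (by rw [𝒢.d_inv, hkq])
  have hgs' : 𝒢.comp g s := 𝒢.comp_of_d_eq_r hgs
  have hf : (cast e₂ ((smashActionData 𝒢 B deco hgr).act (𝒢.inv k) f)).1 = f.1 :=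
    eq_of_heq ((Smash.val_cast 𝒢 B deco hgr rfl hcond.2.2.1 e₂ _).trans <| heq_of_eq <|
      smashActionData_act_val 𝒢 B deco hgr _ f (by rw [𝒢.d_inv, hkq])
        (show _ = 𝒢.r (𝒢.mul k t) by rw [𝒢.d_inv, 𝒢.r_mul (𝒢.comp_of_d_eq_r hkt)]))
  refine eq_of_heq ((Smash.val_cast 𝒢 B deco hgr hcond.2.2.2.1 hcond.2.2.2.2 e₁ _).trans ?_)
  rw [smashActionData_act_val 𝒢 B deco hgr k _
    (show _ = 𝒢.r (𝒢.mul (𝒢.inv k) q) by rw [𝒢.r_mul hkq', 𝒢.r_inv])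
    (show _ = 𝒢.r (𝒢.mul g s) by rw [𝒢.r_mul hgs', hgt, hkt])]
  exact heq_of_eq (congrArg (B.comp · l.1) hf)

end SmashProduct

/-- The morphisms `_{(y,f)}(B ⊗ 𝒢)_{(x,e)} = ⊕_{g ∈ _f𝒢_e} _yB_x^g`. -/
def tensorHoms (𝒢 : AlgGroupoid G) {B : RSemicat.{u, v, w} R Ob}
    (deco : ∀ y x : Ob, G → Submodule R (B.Hom y x)) (y : Ob) (f : G) (x : Ob) (e : G) :
    Submodule R (B.Hom y x) :=
  ⨆ u ∈ {u : G | 𝒢.d u = e ∧ 𝒢.r u = f}, deco y x u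

section SkewSmash

variable (𝒢 : AlgGroupoid G) (B : RSemicat.{u, v, w} R Ob)
  (deco : ∀ y x : Ob, G → Submodule R (B.Hom y x)) (hgr : IsGrading 𝒢 B deco)

/-- The functor `F : (B#𝒢) ∗_α 𝒢 → B ⊗ 𝒢` on morphisms. -/
def skewSmashToTensor (y : Ob) (t : G) (x : Ob) (s : G) :
    SkewHomT (Smash 𝒢 B deco hgr) (smashActionData 𝒢 B deco hgr) (y, t) (x, s) →ₗ[R]
      B.Hom y x :=
  DFinsupp.lsum ℕ fun g => (smashMod 𝒢 B deco (y, t) (smashAct₀ 𝒢 g (x, s))).subtype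

variable {𝒢 B deco hgr} {x y : Ob} {s t : G}

theorem skewSmashToTensor_apply
    (F : SkewHomT (Smash 𝒢 B deco hgr) (smashActionData 𝒢 B deco hgr) (y, t) (x, s)) :
    skewSmashToTensor 𝒢 B deco hgr y t x s F = F.sum fun _ v => v.1 :=
  (DFinsupp.lsum_apply_apply _ _ _).trans (DFinsupp.sumAddHom_apply _ _)

theorem skewSmashToTensor_single (g : G)
    (m : (Smash 𝒢 B deco hgr).Hom (y, t) ((smashActionData 𝒢 B deco hgr).act₀ g (x, s))) :
    skewSmashToTensor 𝒢 B deco hgr y t x s (DFinsupp.single g m) = m.1 :=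
  DFinsupp.lsum_single _ _ _ _

section Support

variable {F : SkewHomT (Smash 𝒢 B deco hgr) (smashActionData 𝒢 B deco hgr) (y, t) (x, s)}

theorem d_eq_and_r_eq_of_mem_skewHoms
    (hF : F ∈ skewHoms 𝒢 (Smash 𝒢 B deco hgr) (smashActionData 𝒢 B deco hgr) (y, t) (x, s))
    {g : G} (hg : F g ≠ 0) :
    𝒢.d g = 𝒢.r s ∧ 𝒢.r g = 𝒢.r t := by
  refine ⟨by_contra fun h => hg ((hF g).2 fun hx => h ?_), by_contra fun h => hg ?_⟩
  · rw [← 𝒢.r_inv]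
    exact hx.symm
  · have hI := (hF g).1
    change F g ∈ (if 𝒢.r t = 𝒢.r g ∧ _ then ⊤ else ⊥) at hI
    rwa [if_neg fun hc => h hc.1.symm, Submodule.mem_bot] at hI

theorem val_mem_deco_of_mem_skewHoms
    (hF : F ∈ skewHoms 𝒢 (Smash 𝒢 B deco hgr) (smashActionData 𝒢 B deco hgr) (y, t) (x, s))
    (g : G) : (F g).1 ∈ deco y x (𝒢.mul (𝒢.inv t) (𝒢.mul g s)) := by
  by_cases hg : F g = 0
  · rw [hg]
    exact Submodule.zero_mem _
  obtain ⟨hs, ht⟩ := d_eq_and_r_eq_of_mem_skewHoms hF hg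
  have hmem := (F g).2
  change (F g).1 ∈ (if 𝒢.r t = 𝒢.r (𝒢.mul g s) then _ else ⊥) at hmem
  rwa [𝒢.r_mul (𝒢.comp_of_d_eq_r hs), if_pos ht.symm] at hmem

theorem skewSmashToTensor_mem_tensorHoms
    (hF : F ∈ skewHoms 𝒢 (Smash 𝒢 B deco hgr) (smashActionData 𝒢 B deco hgr) (y, t) (x, s)) :
    skewSmashToTensor 𝒢 B deco hgr y t x s F ∈ tensorHoms 𝒢 deco y (𝒢.d t) x (𝒢.d s) := by
  rw [skewSmashToTensor_apply]
  refine Submodule.dfinsuppSum_mem _ _ _ fun g hg => ?_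
  obtain ⟨hs, ht⟩ := d_eq_and_r_eq_of_mem_skewHoms hF hg
  exact Submodule.mem_iSup_of_mem _ (Submodule.mem_iSup_of_mem
    ⟨𝒢.d_inv_mul_mul hs ht, 𝒢.r_inv_mul_mul hs ht⟩ (val_mem_deco_of_mem_skewHoms hF g))

/-- The components of `F` lie in the graded pieces `_yB_x^{t⁻¹gs}`, whose indices are distinct. -/
theorem eq_zero_of_skewSmashToTensor_eq_zero
    (hF : F ∈ skewHoms 𝒢 (Smash 𝒢 B deco hgr) (smashActionData 𝒢 B deco hgr) (y, t) (x, s))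
    (h0 : skewSmashToTensor 𝒢 B deco hgr y t x s F = 0) : F = 0 := by
  ext g
  by_contra hg
  have hinj : Set.InjOn (fun g => 𝒢.mul (𝒢.inv t) (𝒢.mul g s)) F.support :=
    fun g hg g' hg' => by
      obtain ⟨hs, ht⟩ := d_eq_and_r_eq_of_mem_skewHoms hF (DFinsupp.mem_support_iff.1 hg)
      obtain ⟨hs', ht'⟩ := d_eq_and_r_eq_of_mem_skewHoms hF (DFinsupp.mem_support_iff.1 hg')
      exact 𝒢.eq_of_inv_mul_mul_eq hs ht hs' ht'
  rw [skewSmashToTensor_apply] at h0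
  exact hg (Subtype.ext ((hgr.1 y x).submodule_iSupIndep.eq_zero_of_sum_eq_zero_of_injOn hinj
    (fun g _ => val_mem_deco_of_mem_skewHoms hF g) h0 (DFinsupp.mem_support_iff.2 hg)))

end Support

theorem skewSmashToTensor_injOn :
    Set.InjOn (skewSmashToTensor 𝒢 B deco hgr y t x s)
      (skewHoms 𝒢 (Smash 𝒢 B deco hgr) (smashActionData 𝒢 B deco hgr) (y, t) (x, s)) :=
  fun F hF K hK h => sub_eq_zero.1 <| eq_zero_of_skewSmashToTensor_eq_zero
    (Submodule.sub_mem _ hF hK) (by rw [map_sub, h, sub_self])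

theorem tensorHoms_le_map_skewSmashToTensor :
    tensorHoms 𝒢 deco y (𝒢.d t) x (𝒢.d s) ≤
      (skewHoms 𝒢 (Smash 𝒢 B deco hgr) (smashActionData 𝒢 B deco hgr) (y, t) (x, s)).map
        (skewSmashToTensor 𝒢 B deco hgr y t x s) := by
  refine iSup₂_le fun u ⟨hs, ht⟩ m hm => ?_
  obtain ⟨g, hgs, hgt, rfl⟩ := 𝒢.exists_inv_mul_mul_eq hs ht
  have hm' : m ∈ smashMod 𝒢 B deco (y, t) (smashAct₀ 𝒢 g (x, s)) := by
    change m ∈ (if 𝒢.r t = 𝒢.r (𝒢.mul g s) then _ else ⊥)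
    rwa [𝒢.r_mul (𝒢.comp_of_d_eq_r hgs), if_pos hgt.symm]
  refine ⟨DFinsupp.single g ⟨m, hm'⟩, single_mem_skewHoms _ _ _ ?_ ?_,
    skewSmashToTensor_single _ _⟩
  · change _ ∈ (if 𝒢.r t = 𝒢.r g ∧ 𝒢.r (𝒢.mul g s) = 𝒢.r g then ⊤ else ⊥)
    rw [if_pos ⟨hgt.symm, 𝒢.r_mul (𝒢.comp_of_d_eq_r hgs)⟩]
    exact Submodule.mem_top
  · change 𝒢.r s = 𝒢.r (𝒢.inv g)
    rw [𝒢.r_inv, hgs]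

theorem skewSmashToTensor_skewHomMul {z : Ob} {q : G}
    {F : SkewHomT (Smash 𝒢 B deco hgr) (smashActionData 𝒢 B deco hgr) (z, q) (y, t)}
    {K : SkewHomT (Smash 𝒢 B deco hgr) (smashActionData 𝒢 B deco hgr) (y, t) (x, s)}
    (hF : F ∈ skewHoms 𝒢 (Smash 𝒢 B deco hgr) (smashActionData 𝒢 B deco hgr) (z, q) (y, t))
    (hK : K ∈ skewHoms 𝒢 (Smash 𝒢 B deco hgr) (smashActionData 𝒢 B deco hgr) (y, t) (x, s)) :
    skewSmashToTensor 𝒢 B deco hgr z q x s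
        (skewHomMul 𝒢 (Smash 𝒢 B deco hgr) (smashActionData 𝒢 B deco hgr) F K) =
      B.comp (skewSmashToTensor 𝒢 B deco hgr z q y t F)
        (skewSmashToTensor 𝒢 B deco hgr y t x s K) := by
  rw [skewSmashToTensor_apply F, skewSmashToTensor_apply K, skewHomMul]
  simp only [DFinsupp.sum, map_sum]
  refine (Eq.trans ?_ (B.comp_sum_sum _ _ (fun k => (F k).1) (fun g => (K g).1)).symm)
  refine Finset.sum_congr rfl fun k hk => Finset.sum_congr rfl fun g hg => ?_
  obtain ⟨hkt, hkq⟩ := d_eq_and_r_eq_of_mem_skewHoms hF (DFinsupp.mem_support_iff.1 hk)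
  obtain ⟨hgs, hgt⟩ := d_eq_and_r_eq_of_mem_skewHoms hK (DFinsupp.mem_support_iff.1 hg)
  rw [skewSmashToTensor_single]
  exact skewMul_smash_val 𝒢 B deco hgr hkt hkq hgs hgt _ _

theorem bijOn_skewSmashToTensor :
    Set.BijOn (skewSmashToTensor 𝒢 B deco hgr y t x s)
      (skewHoms 𝒢 (Smash 𝒢 B deco hgr) (smashActionData 𝒢 B deco hgr) (y, t) (x, s))
      (tensorHoms 𝒢 deco y (𝒢.d t) x (𝒢.d s)) :=
  ⟨fun _ hF => skewSmashToTensor_mem_tensorHoms hF, skewSmashToTensor_injOn,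
    fun _ hm => tensorHoms_le_map_skewSmashToTensor hm⟩

end SkewSmash

theorem stmt19_general {R : Type u} [CommRing R] {G : Type u₂} {Ob : Type v}
    (𝒢 : AlgGroupoid G)
    (B : RSemicat.{u, v, w} R Ob)
    (deco : ∀ y x : Ob, G → Submodule R (B.Hom y x))
    (hgr : IsGrading 𝒢 B deco) :
    -- `F` is bijective on morphism spaces: the identification
    -- `_{(y,t)}[(B#𝒢)∗_α𝒢]_{(x,s)} = _{(y, d t)}(B⊗𝒢)_{(x, d s)}`
    (∀ (x y : Ob) (s t : G),
      Set.BijOn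
        (fun F : SkewHomT (Smash 𝒢 B deco hgr) (smashActionData 𝒢 B deco hgr) (y, t) (x, s) =>
          DFinsupp.sum F fun (g : G) v => (v.1 : B.Hom y x))
        {F | ∀ g : G,
          F g ∈ (smashActionData 𝒢 B deco hgr).I g (y, t)
              ((smashActionData 𝒢 B deco hgr).act₀ g (x, s)) ∧
          ((x, s) ∉ (smashActionData 𝒢 B deco hgr).D₀ (𝒢.inv g) → F g = 0)}
        ((⨆ u ∈ {u : G | 𝒢.d u = 𝒢.d s ∧ 𝒢.r u = 𝒢.d t}, deco y x u :
            Submodule R (B.Hom y x)) : Set (B.Hom y x))) ∧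
    -- the identification is additive and `R`-linear
    (∀ (x y : Ob) (s t : G)
        (F K : SkewHomT (Smash 𝒢 B deco hgr) (smashActionData 𝒢 B deco hgr) (y, t) (x, s)),
      DFinsupp.sum (F + K) (fun (g : G) v => (v.1 : B.Hom y x)) =
        (DFinsupp.sum F (fun (g : G) v => (v.1 : B.Hom y x)) : B.Hom y x) +
          (DFinsupp.sum K (fun (g : G) v => (v.1 : B.Hom y x)) : B.Hom y x)) ∧
    (∀ (x y : Ob) (s t : G) (c : R)
        (F : SkewHomT (Smash 𝒢 B deco hgr) (smashActionData 𝒢 B deco hgr) (y, t) (x, s)),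
      DFinsupp.sum (c • F) (fun (g : G) v => (v.1 : B.Hom y x)) =
        c • (DFinsupp.sum F (fun (g : G) v => (v.1 : B.Hom y x)) : B.Hom y x)) ∧
    -- the identification intertwines the composition of `(B#𝒢)∗_α𝒢` with
    -- that of `B⊗𝒢` (fullness of `F` on composites)
    (∀ (x y z : Ob) (s t r' : G)
        (F : SkewHomT (Smash 𝒢 B deco hgr) (smashActionData 𝒢 B deco hgr) (z, r') (y, t))
        (K : SkewHomT (Smash 𝒢 B deco hgr) (smashActionData 𝒢 B deco hgr) (y, t) (x, s)),
      (∀ g : G,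
          F g ∈ (smashActionData 𝒢 B deco hgr).I g (z, r')
              ((smashActionData 𝒢 B deco hgr).act₀ g (y, t)) ∧
          ((y, t) ∉ (smashActionData 𝒢 B deco hgr).D₀ (𝒢.inv g) → F g = 0)) →
      (∀ g : G,
          K g ∈ (smashActionData 𝒢 B deco hgr).I g (y, t)
              ((smashActionData 𝒢 B deco hgr).act₀ g (x, s)) ∧
          ((x, s) ∉ (smashActionData 𝒢 B deco hgr).D₀ (𝒢.inv g) → K g = 0)) →
      DFinsupp.sum (skewHomMul 𝒢 (Smash 𝒢 B deco hgr) (smashActionData 𝒢 B deco hgr) F K)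
          (fun (g : G) v => (v.1 : B.Hom z x)) =
        B.comp (DFinsupp.sum F fun (g : G) v => (v.1 : B.Hom z y) : B.Hom z y)
          (DFinsupp.sum K fun (g : G) v => (v.1 : B.Hom y x) : B.Hom y x)) ∧
    -- essential surjectivity of `F(x, s) = (x, d s)`
    (∀ e ∈ 𝒢.units, ∃ s : G, 𝒢.d s = e) := by
  simp only [← skewSmashToTensor_apply]
  exact ⟨fun x y s t => bijOn_skewSmashToTensor, fun x y s t => map_add _,
    fun x y s t => map_smul _, fun x y z s t q F K hF hK => skewSmashToTensor_skewHomMul hF hK,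
    fun e ⟨g, hg⟩ => ⟨g, hg.symm⟩⟩

/-- Let `𝒢` be a groupoid with `𝒢₀` finite, `B` a
`𝒢`-graded `R`-category, and `α` the global action of `𝒢` on `B # 𝒢` of
Theorem 5.2. Then the skew groupoid category `(B#𝒢) ∗_α 𝒢` is equivalent
to `B ⊗ 𝒢`: the functor `F(x, s) = (x, d s)` identifies
`_{(y,t)}[(B#𝒢)∗_α𝒢]_{(x,s)}` with
`⊕_{u : d u = d s, r u = d t} _yB_x^u = _{(y,d t)}(B⊗𝒢)_{(x,d s)}`
`R`-linearly and compatibly with composition (so `F` is full and faithful),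
and `F` is essentially surjective; hence `F` is an equivalence. -/
theorem stmt19 {R : Type u} [CommRing R] {G : Type u₂} {Ob : Type v}
    (𝒢 : AlgGroupoid G) (hfin : (𝒢.units).Finite)
    (B : RSemicat.{u, v, w} R Ob)
    (deco : ∀ y x : Ob, G → Submodule R (B.Hom y x))
    (hgr : IsGrading 𝒢 B deco)
    (ident : ∀ x : Ob, B.Hom x x)
    (hident : ∀ x : Ob,
      (∀ (y : Ob) (f : B.Hom x y), B.comp (ident x) f = f) ∧
      (∀ (y : Ob) (f : B.Hom y x), B.comp f (ident x) = f)) :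
    -- `F` is bijective on morphism spaces: the identification
    -- `_{(y,t)}[(B#𝒢)∗_α𝒢]_{(x,s)} = _{(y, d t)}(B⊗𝒢)_{(x, d s)}`
    (∀ (x y : Ob) (s t : G),
      Set.BijOn
        (fun F : SkewHomT (Smash 𝒢 B deco hgr) (smashActionData 𝒢 B deco hgr) (y, t) (x, s) =>
          DFinsupp.sum F fun (g : G) v => (v.1 : B.Hom y x))
        {F | ∀ g : G,
          F g ∈ (smashActionData 𝒢 B deco hgr).I g (y, t)
              ((smashActionData 𝒢 B deco hgr).act₀ g (x, s)) ∧
          ((x, s) ∉ (smashActionData 𝒢 B deco hgr).D₀ (𝒢.inv g) → F g = 0)}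
        ((⨆ u ∈ {u : G | 𝒢.d u = 𝒢.d s ∧ 𝒢.r u = 𝒢.d t}, deco y x u :
            Submodule R (B.Hom y x)) : Set (B.Hom y x))) ∧
    -- the identification is additive and `R`-linear
    (∀ (x y : Ob) (s t : G)
        (F K : SkewHomT (Smash 𝒢 B deco hgr) (smashActionData 𝒢 B deco hgr) (y, t) (x, s)),
      DFinsupp.sum (F + K) (fun (g : G) v => (v.1 : B.Hom y x)) =
        (DFinsupp.sum F (fun (g : G) v => (v.1 : B.Hom y x)) : B.Hom y x) +
          (DFinsupp.sum K (fun (g : G) v => (v.1 : B.Hom y x)) : B.Hom y x)) ∧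
    (∀ (x y : Ob) (s t : G) (c : R)
        (F : SkewHomT (Smash 𝒢 B deco hgr) (smashActionData 𝒢 B deco hgr) (y, t) (x, s)),
      DFinsupp.sum (c • F) (fun (g : G) v => (v.1 : B.Hom y x)) =
        c • (DFinsupp.sum F (fun (g : G) v => (v.1 : B.Hom y x)) : B.Hom y x)) ∧
    -- the identification intertwines the composition of `(B#𝒢)∗_α𝒢` with
    -- that of `B⊗𝒢` (fullness of `F` on composites)
    (∀ (x y z : Ob) (s t r' : G)
        (F : SkewHomT (Smash 𝒢 B deco hgr) (smashActionData 𝒢 B deco hgr) (z, r') (y, t))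
        (K : SkewHomT (Smash 𝒢 B deco hgr) (smashActionData 𝒢 B deco hgr) (y, t) (x, s)),
      (∀ g : G,
          F g ∈ (smashActionData 𝒢 B deco hgr).I g (z, r')
              ((smashActionData 𝒢 B deco hgr).act₀ g (y, t)) ∧
          ((y, t) ∉ (smashActionData 𝒢 B deco hgr).D₀ (𝒢.inv g) → F g = 0)) →
      (∀ g : G,
          K g ∈ (smashActionData 𝒢 B deco hgr).I g (y, t)
              ((smashActionData 𝒢 B deco hgr).act₀ g (x, s)) ∧
          ((x, s) ∉ (smashActionData 𝒢 B deco hgr).D₀ (𝒢.inv g) → K g = 0)) →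
      DFinsupp.sum (skewHomMul 𝒢 (Smash 𝒢 B deco hgr) (smashActionData 𝒢 B deco hgr) F K)
          (fun (g : G) v => (v.1 : B.Hom z x)) =
        B.comp (DFinsupp.sum F fun (g : G) v => (v.1 : B.Hom z y) : B.Hom z y)
          (DFinsupp.sum K fun (g : G) v => (v.1 : B.Hom y x) : B.Hom y x)) ∧
    -- essential surjectivity of `F(x, s) = (x, d s)`
    (∀ e ∈ 𝒢.units, ∃ s : G, 𝒢.d s = e) :=
  stmt19_general 𝒢 B deco hgr
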